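/- For an integer m ≥ 3, let Ω denote the m × m real matrix with rows and columns indexed by 0, 1, …, m−1, whose entries are: Ω(0,1) = 2; Ω(i,j) = 1 whenever |i − j| = 1 and (i,j) ≠ (0,1); Ω(m−1,0) = 1; and all other entries equal 0. If m is odd, then for every t ∈ ℝ the (0,0) entry of the matrix exponential exp(tΩ) equals (1/m)·( e^{2t} + 2·Σ_{q=1}^{(m−1)/2} e^{2t·cos(2πq/m)} ). -/

import Mathlib

open scoped BigOperators

/-- The `m × m` comparison matrix `Ω`: `Ω 0 1 = 2`, `Ω i j = 1` when `|i − j| = 1`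
and `(i,j) ≠ (0,1)`, `Ω (m−1) 0 = 1`, all other entries `0`. -/
def OmegaMat (m : ℕ) : Matrix (Fin m) (Fin m) ℝ := fun i j =>
  if i.val = 0 ∧ j.val = 1 then 2
  else if i.val + 1 = j.val ∨ j.val + 1 = i.val then 1
  else if i.val = m - 1 ∧ j.val = 0 then 1
  else 0

/-!
The vectors `cosVec m q = (cos (2πqk/m))ₖ` are eigenvectors of `Ω` with eigenvalue
`2 cos (2πq/m)`: on even `m`-periodic sequences `Ω` acts as `f ↦ f (· + 1) + f (· - 1)`.
By the orthogonality of the `m`-th roots of unity, `e₀ = (1/m) ∑_{q<m} cosVec m q`, hence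
`exp (tΩ) 0 0 = (1/m) ∑_{q<m} e^{2t cos (2πq/m)}`. For odd `m` the terms `q` and `m - q`
pair up, and only `q = 0` is left alone.
-/
open Finset Matrix Real

theorem Finset.sum_range_two_mul_add_one_of_symm {M : Type*} [AddCommMonoid M] (f : ℕ → M)
    (h : ℕ) (hf : ∀ q ∈ Icc 1 h, f (2 * h + 1 - q) = f q) :
    ∑ q ∈ range (2 * h + 1), f q = f 0 + 2 • ∑ q ∈ Icc 1 h, f q := by
  have hshift : ∑ q ∈ range h, f (q + 1) = ∑ q ∈ Icc 1 h, f q := by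
    rw [range_eq_Ico, sum_Ico_add' f 0 h 1, Ico_add_one_right_eq_Icc]
  have hupper : ∑ q ∈ range h, f (h + q + 1) = ∑ q ∈ range h, f (q + 1) := by
    rw [← sum_range_reflect]
    refine sum_congr rfl fun q hq => ?_
    have hq := mem_range.1 hq
    rw [← hf (q + 1) (mem_Icc.2 ⟨by omega, by omega⟩)]
    congr 1
    omega
  rw [sum_range_succ', two_mul, sum_range_add, hupper, hshift, two_nsmul, add_comm]

theorem sum_range_cos_two_pi_mul_eq_zero {m k : ℕ} (hk : ¬ m ∣ k) :
    ∑ q ∈ range m, cos (2 * π * q * k / m) = 0 := by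
  rcases Nat.eq_zero_or_pos m with rfl | hm
  · simp
  set ζ := Complex.exp (2 * π * Complex.I / m)
  have hζ : IsPrimitiveRoot ζ m := Complex.isPrimitiveRoot_exp m hm.ne'
  have hζk : ζ ^ k ≠ 1 := by rwa [Ne, hζ.pow_eq_one_iff_dvd]
  have hgeom : ∑ q ∈ range m, (ζ ^ k) ^ q = 0 := by
    rw [geom_sum_eq hζk, ← pow_mul, mul_comm, pow_mul, hζ.pow_eq_one, one_pow, sub_self, zero_div]
  have hre (q : ℕ) : ((ζ ^ k) ^ q).re = cos (2 * π * q * k / m) := by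
    rw [← pow_mul, ← Complex.exp_nat_mul, ← Complex.exp_ofReal_mul_I_re]
    push_cast
    ring_nf
  simpa [hre] using congrArg Complex.re hgeom

section
attribute [local instance] Matrix.linftyOpNormedRing Matrix.linftyOpNormedAlgebra

theorem Matrix.exp_mulVec_of_mulVec_eq_smul {n 𝕂 : Type*} [Fintype n] [DecidableEq n] [RCLike 𝕂]
    {A : Matrix n n 𝕂} {v : n → 𝕂} {μ : 𝕂} (h : A *ᵥ v = μ • v) :
    NormedSpace.exp A *ᵥ v = NormedSpace.exp μ • v := by
  have hpow (k : ℕ) : A ^ k *ᵥ v = μ ^ k • v := by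
    induction k with
    | zero => simp
    | succ k ih => rw [pow_succ', ← mulVec_mulVec, ih, mulVec_smul, h, smul_smul, ← pow_succ]
  have hA := (NormedSpace.exp_series_hasSum_exp' (𝕂 := 𝕂) A).map ((mulVecBilin 𝕂 𝕂).flip v)
    (LinearMap.continuous_of_finiteDimensional _)
  refine hA.unique ?_
  convert (NormedSpace.exp_series_hasSum_exp' (𝕂 := 𝕂) μ).smul_const v using 2 with k
  simp [hpow, smul_smul]
end

-- Row `i` has its ones in the columns of the cyclic successor of `i` and of `|i - 1|`;
-- in row `0` both are column `1`, which accounts for the entry `2`.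
theorem OmegaMat_apply {m : ℕ} (hm : 3 ≤ m) (i j : Fin m) :
    OmegaMat m i j =
      (if (j : ℕ) = (if (i : ℕ) + 1 = m then 0 else (i : ℕ) + 1) then (1 : ℝ) else 0) +
        (if (j : ℕ) = (if (i : ℕ) = 0 then 1 else (i : ℕ) - 1) then 1 else 0) := by
  have := i.isLt
  unfold OmegaMat
  split_ifs <;> norm_num <;> omega

theorem OmegaMat_mulVec_apply {m : ℕ} (hm : 3 ≤ m) {f : ℤ → ℝ} (heven : ∀ k, f (-k) = f k)
    (hper : ∀ k, f (k + m) = f k) (i : Fin m) :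
    (OmegaMat m *ᵥ fun j => f j) i = f (i + 1) + f (i - 1) := by
  have hsucc : (if (i : ℕ) + 1 = m then 0 else (i : ℕ) + 1) < m := by split_ifs <;> omega
  have hpred : (if (i : ℕ) = 0 then 1 else (i : ℕ) - 1) < m := by split_ifs <;> omega
  simp only [mulVec, dotProduct, OmegaMat_apply hm, add_mul, ite_mul, one_mul, zero_mul]
  rw [Fin.sum_univ_eq_sum_range (fun k => (if k = _ then f k else 0) + (if k = _ then f k else 0)),
    sum_add_distrib, sum_ite_eq', sum_ite_eq', if_pos (mem_range.2 hsucc),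
    if_pos (mem_range.2 hpred)]
  congr 1
  · split_ifs with h
    · simpa [← h] using (hper 0).symm
    · push_cast; rfl
  · split_ifs with h
    · simpa [h] using (heven 1).symm
    · push_cast [Nat.one_le_iff_ne_zero.2 h]; rfl

noncomputable def cosVec (m q : ℕ) (k : Fin m) : ℝ := cos (2 * π * q * k / m)

theorem OmegaMat_mulVec_cosVec {m : ℕ} (hm : 3 ≤ m) (q : ℕ) :
    OmegaMat m *ᵥ cosVec m q = (2 * cos (2 * π * q / m)) • cosVec m q := by
  ext i
  have h := OmegaMat_mulVec_apply hm (f := fun k : ℤ => cos (2 * π * q * k / m))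
    (fun k => by rw [Int.cast_neg, mul_neg, neg_div, cos_neg])
    (fun k => by
      convert cos_add_nat_mul_two_pi (2 * π * q * k / m) q using 2
      push_cast
      field_simp) i
  simp only [Int.cast_natCast] at h
  refine h.trans ?_
  rw [Pi.smul_apply, smul_eq_mul, cos_add_cos, cosVec]
  push_cast
  ring_nf

theorem sum_range_cosVec {m : ℕ} (hm : 0 < m) :
    ∑ q ∈ range m, cosVec m q = (m : ℝ) • Pi.single ⟨0, hm⟩ 1 := by
  ext k
  rw [Finset.sum_apply, Pi.smul_apply, smul_eq_mul]
  by_cases hk : k = ⟨0, hm⟩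
  · subst hk
    simp [cosVec]
  · have hkm : ¬ m ∣ k := fun h => hk (Fin.ext (Nat.eq_zero_of_dvd_of_lt h k.isLt))
    rw [Pi.single_eq_of_ne hk, mul_zero, ← sum_range_cos_two_pi_mul_eq_zero hkm]
    rfl

theorem exp_smul_OmegaMat_mulVec_cosVec {m : ℕ} (hm : 3 ≤ m) (t : ℝ) (q : ℕ) :
    NormedSpace.exp (t • OmegaMat m) *ᵥ cosVec m q =
      Real.exp (2 * t * cos (2 * π * q / m)) • cosVec m q := by
  rw [Real.exp_eq_exp_ℝ]
  refine Matrix.exp_mulVec_of_mulVec_eq_smul ?_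
  rw [smul_mulVec, OmegaMat_mulVec_cosVec hm, smul_smul]
  ring_nf

theorem exp_smul_OmegaMat_apply_zero_zero {m : ℕ} (hm : 3 ≤ m) (t : ℝ) :
    NormedSpace.exp (t • OmegaMat m) ⟨0, (Nat.zero_lt_succ 2).trans_le hm⟩
      ⟨0, (Nat.zero_lt_succ 2).trans_le hm⟩ =
      (1 / (m : ℝ)) * ∑ q ∈ range m, Real.exp (2 * t * cos (2 * π * q / m)) := by
  set o : Fin m := ⟨0, (Nat.zero_lt_succ 2).trans_le hm⟩
  have hm0 : (m : ℝ) ≠ 0 := by positivity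
  calc _ = (NormedSpace.exp (t • OmegaMat m) *ᵥ Pi.single o 1) o := by
        simp
    _ = (1 / (m : ℝ)) *
          (NormedSpace.exp (t • OmegaMat m) *ᵥ ∑ q ∈ range m, cosVec m q) o := by
        rw [sum_range_cosVec, mulVec_smul, Pi.smul_apply, smul_eq_mul, one_div,
          inv_mul_cancel_left₀ hm0]
    _ = _ := by simp [mulVec_sum, Finset.sum_apply, exp_smul_OmegaMat_mulVec_cosVec hm, cosVec]

/-- For odd `m ≥ 3`, the `(0,0)` entry of `exp(tΩ)` equals
`(1/m)·(e^{2t} + 2·Σ_{q=1}^{(m−1)/2} e^{2t·cos(2πq/m)})`. -/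
theorem stmt6 (m : ℕ) (hm : 3 ≤ m) (hodd : Odd m) (t : ℝ) :
    (NormedSpace.exp (t • OmegaMat m)) ⟨0, by omega⟩ ⟨0, by omega⟩ =
      (1 / (m : ℝ)) * (Real.exp (2 * t) +
        2 * ∑ q ∈ Finset.Icc 1 ((m - 1) / 2),
          Real.exp (2 * t * Real.cos (2 * Real.pi * q / m))) := by
  obtain ⟨h, hh⟩ := hodd
  have hsymm (q : ℕ) (hq : q ∈ Icc 1 h) :
      Real.exp (2 * t * cos (2 * π * ↑(2 * h + 1 - q) / m)) =
        Real.exp (2 * t * cos (2 * π * q / m)) := by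
    rw [← hh, Nat.cast_sub (by rw [mem_Icc] at hq; omega), ← cos_two_pi_sub]
    congr 3
    field_simp
    ring
  rw [exp_smul_OmegaMat_apply_zero_zero hm, show range m = range (2 * h + 1) by rw [hh],
    sum_range_two_mul_add_one_of_symm _ h hsymm, nsmul_eq_mul, show (m - 1) / 2 = h by omega]
  simp
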